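/- If π and π* are probability density functions on ℝ^d with ∫ |π*(x) − π(x)| dx ≤ ε/2, then for the Metropolis–Hastings independence sampler with target π and proposal π*, the stationary expected rejection probability satisfies ∬ (1 − min(1, (π(x')π*(x))/(π(x)π*(x')))) π(x) π*(x') dx dx' ≤ ε. -/
import Mathlib

open MeasureTheory

lemma aux_pt (a b : ℝ) (ha : 0 ≤ a) (hb : 0 ≤ b) :
    (1 - min 1 (b / a)) * a ≤ |a - b| := by
  rcases ha.eq_or_lt with h | h
  · simp [← h]
  rcases le_total b a with hab | hab
  · rw [min_eq_right ((div_le_one h).mpr hab), abs_of_nonneg (by linarith)]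
    have : (1 - b / a) * a = a - b := by field_simp
    rw [this]
  · rw [min_eq_left ((one_le_div h).mpr hab)]
    simp [abs_nonneg]

/-- Bound on the stationary expected rejection probability of the independence
Metropolis–Hastings sampler in terms of the L¹ distance of the densities. -/
theorem mh_rejection_rate_bound (d : ℕ) (ε : ℝ)
    (π πs : (Fin d → ℝ) → ℝ)
    (hπ0 : ∀ x, 0 ≤ π x) (hπs0 : ∀ x, 0 ≤ πs x)
    (hπint : Integrable π) (hπsint : Integrable πs)
    (hπ1 : ∫ x, π x = 1) (hπs1 : ∫ x, πs x = 1)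
    (hL1 : ∫ x, |πs x - π x| ≤ ε / 2) :
    ∫ x, ∫ x', (1 - min 1 ((π x' * πs x) / (π x * πs x'))) * (π x * πs x') ≤ ε := by
  set D : ℝ := ∫ x, |πs x - π x| with hD
  have hDint : Integrable (fun x => |πs x - π x|) := (hπsint.sub hπint).abs
  have hD0 : 0 ≤ D := integral_nonneg fun x => abs_nonneg _
  have hnn : ∀ x x', 0 ≤ (1 - min 1 ((π x' * πs x) / (π x * πs x'))) * (π x * πs x') :=
    fun x x' => mul_nonneg (by simp [min_le_left]) (mul_nonneg (hπ0 x) (hπs0 x'))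
  have key : ∀ x, ∫ x', (1 - min 1 ((π x' * πs x) / (π x * πs x'))) * (π x * πs x')
      ≤ π x * D + |πs x - π x| := by
    intro x
    have hInt : Integrable (fun x' => π x * |πs x' - π x'| + π x' * |πs x - π x|) :=
      (hDint.const_mul (π x)).add (hπint.mul_const _)
    have hmono : ∀ x', (1 - min 1 ((π x' * πs x) / (π x * πs x'))) * (π x * πs x')
        ≤ π x * |πs x' - π x'| + π x' * |πs x - π x| := by
      intro x'
      calc (1 - min 1 ((π x' * πs x) / (π x * πs x'))) * (π x * πs x')
          ≤ |π x * πs x' - π x' * πs x| :=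
            aux_pt _ _ (mul_nonneg (hπ0 x) (hπs0 x')) (mul_nonneg (hπ0 x') (hπs0 x))
        _ ≤ π x * |πs x' - π x'| + π x' * |πs x - π x| := by
            have h1 : π x * πs x' - π x' * πs x
                = π x * (πs x' - π x') + π x' * (π x - πs x) := by ring
            rw [h1]
            refine (abs_add_le _ _).trans ?_
            rw [abs_mul, abs_mul, abs_of_nonneg (hπ0 x), abs_of_nonneg (hπ0 x'),
              abs_sub_comm (π x)]
    have h2 := integral_mono_of_nonneg (ae_of_all _ fun x' => hnn x x') hInt
      (ae_of_all _ hmono)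
    calc ∫ x', (1 - min 1 ((π x' * πs x) / (π x * πs x'))) * (π x * πs x')
        ≤ ∫ x', (π x * |πs x' - π x'| + π x' * |πs x - π x|) := h2
      _ = π x * D + |πs x - π x| := by
          rw [integral_add (hDint.const_mul (π x)) (hπint.mul_const _),
            integral_const_mul, integral_mul_const, hπ1, one_mul]
  have hGint : Integrable (fun x => π x * D + |πs x - π x|) :=
    (hπint.mul_const D).add hDint
  have h3 := integral_mono_of_nonneg
    (ae_of_all _ fun x => integral_nonneg fun x' => hnn x x') hGint (ae_of_all _ key)
  calc ∫ x, ∫ x', (1 - min 1 ((π x' * πs x) / (π x * πs x'))) * (π x * πs x')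
      ≤ ∫ x, (π x * D + |πs x - π x|) := h3
    _ = D + D := by
        rw [integral_add (hπint.mul_const D) hDint, integral_mul_const, hπ1, one_mul]
    _ ≤ ε := by linarith
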